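/- Let 𝒜 be a symmetric monoidal category and xs, ys, zs lists of objects of 𝒜. Then the splitting isomorphisms satisfy the associativity coherence: φ_{xs++ys,zs} ≫ (φ_{xs,ys} ⊗ 𝟙_{T(zs)}) ≫ α_{T(xs),T(ys),T(zs)} = φ_{xs,ys++zs} ≫ (𝟙_{T(xs)} ⊗ φ_{ys,zs}), as morphisms T(xs ++ ys ++ zs) ⟶ T(xs) ⊗ (T(ys) ⊗ T(zs)). -/

import Mathlib

open CategoryTheory Category MonoidalCategory

universe v v' v'' u u' u''

namespace Paper

variable {C : Type u} [Category.{v} C] [MonoidalCategory C]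

/-- The left-normalized tensor product of a list of objects:
`T [] = 𝟙_ C`, `T [x] = x`, and `T (l ++ [x]) = T l ⊗ x` for `l` nonempty. -/
def T : List C → C
  | [] => 𝟙_ C
  | x :: l => l.foldl (fun a b => a ⊗ b) x

@[simp] lemma T_nil : T ([] : List C) = 𝟙_ C := rfl
@[simp] lemma T_singleton (x : C) : T [x] = x := rfl

lemma T_concat (x : C) (l : List C) (y : C) :
    T (x :: l ++ [y]) = T (x :: l) ⊗ y := by
  simp [T, List.foldl_append]

lemma T_concat' {l : List C} (h : l ≠ []) (y : C) :
    T (l ++ [y]) = T l ⊗ y := by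
  cases l with
  | nil => exact absurd rfl h
  | cons x l => exact T_concat x l y

lemma T_concat2 (x : C) (l : List C) (a b : C) :
    T (x :: l ++ [a, b]) = (T (x :: l) ⊗ a) ⊗ b := by
  simp [T, List.foldl_append]

/-- Auxiliary definition for the splitting isomorphism, in the case where the
first list is nonempty:  for nonempty `xs`, `splitIso xs [y] = 𝟙` and
`splitIso xs (l ++ [y]) = (splitIso xs l ⊗ 𝟙 y) ≫ α` for `l` nonempty. -/
def splitIsoAux (x : C) (xs' : List C) :
    (ys : List C) → (T ((x :: xs') ++ ys) ≅ T (x :: xs') ⊗ T ys) := fun ys =>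
  ys.reverseRecOn
    (eqToIso (by rw [List.append_nil]) ≪≫ (ρ_ (T (x :: xs'))).symm)
    (fun l y ih =>
      match l, ih with
      | [], _ => eqToIso (T_concat x xs' y)
      | a :: l', ih =>
          eqToIso (by rw [← List.append_assoc]; exact T_concat' (by simp) y) ≪≫
            whiskerRightIso ih y ≪≫ α_ (T (x :: xs')) (T (a :: l')) y ≪≫
            whiskerLeftIso (T (x :: xs')) (eqToIso (T_concat a l' y).symm))

/-- The splitting isomorphism `φ_{xs,ys} : T (xs ++ ys) ≅ T xs ⊗ T ys`, defined by the
clauses (in order of priority): `φ_{xs,[]} = (ρ_ (T xs)).symm`, `φ_{[],ys} = (λ_ (T ys)).symm`,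
`φ_{xs,[y]} = 𝟙` for `xs` nonempty, and
`φ_{xs,l++[y]} = (φ_{xs,l} ⊗ 𝟙 y) ≫ α_ (T xs) (T l) y` for `xs`, `l` nonempty. -/
def splitIso : (xs ys : List C) → (T (xs ++ ys) ≅ T xs ⊗ T ys)
  | xs, [] => eqToIso (by rw [List.append_nil]) ≪≫ (ρ_ (T xs)).symm
  | [], y :: ys' => (λ_ (T (y :: ys'))).symm
  | x :: xs', y :: ys' => splitIsoAux x xs' (y :: ys')

/-- The left-normalized tensor product of a componentwise family of morphisms,
encoded as a list of arrows:  `Tmor [] = 𝟙 (𝟙_ C)`, `Tmor [f] = f.hom`, and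
`Tmor (l ++ [f]) = Tmor l ⊗ f.hom` for `l` nonempty. -/
def Tmor : (fs : List (Arrow C)) → (T (fs.map Comma.left) ⟶ T (fs.map Comma.right)) := fun fs =>
  fs.reverseRecOn
    (𝟙 (𝟙_ C))
    (fun l f ih =>
      match l, ih with
      | [], _ => f.hom
      | a :: l', ih =>
          eqToHom (by erw [List.map_append]; exact T_concat' (by exact List.cons_ne_nil _ _) _) ≫
            (ih ⊗ₘ f.hom) ≫
            eqToHom (by erw [List.map_append]; exact (T_concat' (by exact List.cons_ne_nil _ _) _).symm))

/-- The regrouping isomorphism `Φ(xss) : T (xss.flatten) ⟶ T (xss.map T)` defined by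
`Φ([]) = 𝟙` and `Φ(xss ++ [v]) = φ_{xss.flatten,v} ≫ (Φ(xss) ⊗ 𝟙) ≫ (φ_{xss.map T,[T v]})⁻¹`. -/
def Phi : (xss : List (List C)) → (T xss.flatten ⟶ T (xss.map T)) := fun xss =>
  xss.reverseRecOn
    (𝟙 (𝟙_ C))
    (fun l v ih =>
      eqToHom (congrArg T (by simp)) ≫
        (splitIso l.flatten v).hom ≫
        (ih ⊗ₘ 𝟙 (T v)) ≫
        (splitIso (l.map T) [T v]).inv ≫
        eqToHom (congrArg T (by simp)))

/-- A multimorphism: a list of source objects together with a morphism out of their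
left-normalized tensor product into a target object. -/
structure MultiMor (C : Type u) [Category.{v} C] [MonoidalCategory C] where
  src : List C
  tgt : C
  hom : T src ⟶ tgt

/-- The multicomposition `Γ(g; ⟨f_s⟩) = Φ(xss) ≫ Tmor ⟨f_s⟩ ≫ g` of the underlying
multicategory of a monoidal category (for the left-normalized bracketing). -/
def Gamma {z : C} (fs : List (MultiMor C)) (g : T (fs.map MultiMor.tgt) ⟶ z) :
    T ((fs.map MultiMor.src).flatten) ⟶ z :=
  Phi (fs.map MultiMor.src) ≫
    eqToHom (congrArg T (by erw [List.map_map, List.map_map]; exact rfl)) ≫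
    Tmor (fs.map fun m => Arrow.mk m.hom) ≫
    eqToHom (congrArg T (by erw [List.map_map]; exact rfl)) ≫ g

section LaxPart
open Functor.LaxMonoidal

variable {C : Type u} [Category.{v} C] [MonoidalCategory C]
variable {D : Type u'} [Category.{v'} D] [MonoidalCategory D]

/-- The iterated structure map `ξ(xs) : T (xs.map F.obj) ⟶ F.obj (T xs)` of a lax
monoidal functor, defined by `ξ([]) = ε`, `ξ([x]) = 𝟙`, and
`ξ(l ++ [x]) = (ξ(l) ⊗ 𝟙) ≫ μ F (T l) x` for `l` nonempty. -/
def xi (F : C ⥤ D) [F.LaxMonoidal] :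
    (xs : List C) → (T (xs.map F.obj) ⟶ F.obj (T xs)) := fun xs =>
  xs.reverseRecOn
    (ε F)
    (fun l x ih =>
      match l, ih with
      | [], _ => 𝟙 (F.obj x)
      | a :: l', ih =>
          eqToHom (by rw [List.map_append]; exact T_concat' (by simp) (F.obj x)) ≫
            (ih ⊗ₘ 𝟙 (F.obj x)) ≫ μ F (T (a :: l')) x ≫
            eqToHom (congrArg F.obj (T_concat a l' x).symm))

end LaxPart

section BraidedPart

variable {C : Type u} [Category.{v} C] [MonoidalCategory C] [BraidedCategory C]

/-- The adjacent-swap coherence isomorphism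
`Θ_{l,a,b,r} : T (l ++ [a,b] ++ r) ⟶ T (l ++ [b,a] ++ r)`, defined by
`Θ_{[],a,b,[]} = β_{a,b}`, `Θ_{l,a,b,[]} = α ≫ (𝟙 ⊗ β) ≫ α⁻¹` for `l` nonempty, and
`Θ_{l,a,b,r++[c]} = Θ_{l,a,b,r} ⊗ 𝟙 c`. -/
def Theta (l : List C) (a b : C) :
    (r : List C) → (T (l ++ [a, b] ++ r) ⟶ T (l ++ [b, a] ++ r)) := fun r =>
  r.reverseRecOn
    (match l with
      | [] => (β_ a b).hom
      | x :: l' =>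
          eqToHom (by rw [List.append_nil]; exact T_concat2 x l' a b) ≫
            (α_ (T (x :: l')) a b).hom ≫ (𝟙 (T (x :: l')) ⊗ₘ (β_ a b).hom) ≫
            (α_ (T (x :: l')) b a).inv ≫
            eqToHom (by rw [List.append_nil]; exact (T_concat2 x l' b a).symm))
    (fun r' c ih =>
      eqToHom (by rw [← List.append_assoc]; exact T_concat' (by simp) c) ≫
        (ih ⊗ₘ 𝟙 c) ≫
        eqToHom (by rw [← List.append_assoc]; exact (T_concat' (by simp) c).symm))

end BraidedPart

section MultifunctorPart

variable (C : Type u) [Category.{v} C] [MonoidalCategory C] [SymmetricCategory C]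
variable (D : Type u') [Category.{v'} D] [MonoidalCategory D] [SymmetricCategory D]

/-- A multifunctor family from `C` to `D`: an object function `obj` together with maps
`app xs y : (T xs ⟶ y) → (T (xs.map obj) ⟶ obj y)` preserving identities,
multicomposition, and the braiding action transposing the two inputs of a binary
multimorphism.  This encodes a multifunctor between the underlying multicategories. -/
structure MultifunctorFamily where
  obj : C → D
  app : ∀ (xs : List C) (y : C), (T xs ⟶ y) → (T (xs.map obj) ⟶ obj y)
  app_id : ∀ a : C, app [a] a (𝟙 a) = 𝟙 (obj a)
  app_comp : ∀ (z : C) (fs : List (MultiMor C)) (g : T (fs.map MultiMor.tgt) ⟶ z),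
    app ((fs.map MultiMor.src).flatten) z (Gamma fs g) =
      eqToHom (congrArg T
          (by rw [List.map_flatten, List.map_map, List.map_map]; exact rfl)) ≫
        Gamma (fs.map fun m => MultiMor.mk (m.src.map obj) (obj m.tgt) (app m.src m.tgt m.hom))
          (eqToHom (congrArg T (by rw [List.map_map, List.map_map]; exact rfl)) ≫
            app (fs.map MultiMor.tgt) z g)
  app_braiding : ∀ (a b y : C) (f : T [a, b] ⟶ y),
    app [b, a] y ((β_ b a).hom ≫ f) = (β_ (obj b) (obj a)).hom ≫ app [a, b] y f

end MultifunctorPart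


section AssocHelpers
variable {C : Type u} [Category.{v} C] [MonoidalCategory C]

lemma eqToHom_whiskerRight' {a b : C} (h : a = b) (c : C) :
    eqToHom h ▷ c = eqToHom (by rw [h]) := by subst h; simp

lemma whiskerLeft_eqToHom' (c : C) {a b : C} (h : a = b) :
    c ◁ eqToHom h = eqToHom (by rw [h]) := by subst h; simp

lemma splitIso_congr {xs xs' ys ys' : List C} (h1 : xs = xs') (h2 : ys = ys') :
    (splitIso xs ys).hom =
      eqToHom (by rw [h1, h2]) ≫ (splitIso xs' ys').hom ≫ eqToHom (by rw [h1, h2]) := by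
  subst h1; subst h2; simp

lemma splitIso_nil_right' (xs : List C) :
    (splitIso xs []).hom = eqToHom (by rw [List.append_nil]) ≫ (ρ_ (T xs)).inv := by
  cases xs <;> rfl

lemma splitIso_nil_left' (ys : List C) :
    (splitIso [] ys).hom = (λ_ (T ys)).inv := by
  cases ys with
  | nil =>
      rw [splitIso_nil_right']
      simp only [T_nil, ← unitors_inv_equal]
      simp
      exact Category.id_comp _
  | cons y ys => rfl

lemma splitIso_singleton' {xs : List C} (h : xs ≠ []) (y : C) :
    (splitIso xs [y]).hom = eqToHom (T_concat' h y) := by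
  cases xs with
  | nil => exact absurd rfl h
  | cons x xs' =>
      show (splitIsoAux x xs' ([] ++ [y])).hom = _
      unfold splitIsoAux
      rw [List.reverseRecOn_concat]
      rfl

lemma splitIso_concat' {xs l : List C} (hxs : xs ≠ []) (hl : l ≠ []) (y : C) :
    (splitIso xs (l ++ [y])).hom =
      eqToHom (by rw [← List.append_assoc]; exact T_concat' (by simp [hxs]) y) ≫
      ((splitIso xs l).hom ▷ y) ≫ (α_ (T xs) (T l) y).hom ≫
      (T xs ◁ eqToHom (T_concat' hl y).symm) := by
  cases xs with
  | nil => exact absurd rfl hxs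
  | cons x xs' =>
  cases l with
  | nil => exact absurd rfl hl
  | cons a l' =>
      show (splitIsoAux x xs' ((a :: l') ++ [y])).hom = _
      unfold splitIsoAux
      rw [List.reverseRecOn_concat]
      rfl

end AssocHelpers

variable {A : Type u} [Category.{v} A] [MonoidalCategory A] [SymmetricCategory A]

/-- The splitting isomorphisms `φ` satisfy the associativity coherence:
`φ_{xs++ys,zs} ≫ (φ_{xs,ys} ⊗ 𝟙) ≫ α = φ_{xs,ys++zs} ≫ (𝟙 ⊗ φ_{ys,zs})`. -/
theorem splitIso_assoc (xs ys zs : List A) :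
    (splitIso (xs ++ ys) zs).hom ≫ ((splitIso xs ys).hom ⊗ₘ 𝟙 (T zs)) ≫
        (α_ (T xs) (T ys) (T zs)).hom =
      eqToHom (congrArg T (List.append_assoc xs ys zs)) ≫
        (splitIso xs (ys ++ zs)).hom ≫ (𝟙 (T xs) ⊗ₘ (splitIso ys zs).hom) := by
  rcases xs with _ | ⟨x, xs'⟩
  · -- xs = []
    simp only [List.nil_append, splitIso_nil_left', T_nil, tensorHom_id, id_tensorHom]
    rw [← leftUnitor_tensor_inv, ← leftUnitor_inv_naturality]
    simp
  rcases ys with _ | ⟨b, ys'⟩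
  · -- ys = []
    rw [splitIso_congr (List.append_nil (x :: xs')) rfl,
        splitIso_congr (rfl : x :: xs' = x :: xs') (List.nil_append zs),
        splitIso_nil_right', splitIso_nil_left']
    simp only [tensorHom_id, id_tensorHom, comp_whiskerRight, eqToHom_whiskerRight',
      whiskerLeft_eqToHom', assoc, eqToHom_trans_assoc, eqToHom_trans, eqToHom_refl,
      id_comp, comp_id, T_nil, List.nil_append]
    simp
  induction zs using List.reverseRecOn with
  | nil =>
      rw [splitIso_congr (rfl : x :: xs' = x :: xs') (List.append_nil (b :: ys'))]
      simp only [splitIso_nil_right', tensorHom_id, id_tensorHom, comp_whiskerRight,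
        MonoidalCategory.whiskerLeft_comp, eqToHom_whiskerRight', whiskerLeft_eqToHom', assoc,
        eqToHom_trans_assoc, eqToHom_trans, eqToHom_refl, id_comp, comp_id, T_nil]
      rw [← rightUnitor_inv_naturality_assoc, rightUnitor_tensor_inv]
      simp
  | append_singleton r c ih =>
      rcases r with _ | ⟨d, r'⟩
      · -- zs = [c]
        rw [List.nil_append]
        rw [splitIso_singleton' (xs := (x :: xs') ++ (b :: ys')) (by simp) c,
            splitIso_singleton' (xs := b :: ys') (by simp) c,
            splitIso_concat' (xs := x :: xs') (l := b :: ys') (by simp) (by simp) c]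
        simp only [tensorHom_id, id_tensorHom, T_singleton, MonoidalCategory.whiskerLeft_comp,
          comp_whiskerRight, eqToHom_whiskerRight', whiskerLeft_eqToHom', assoc,
          eqToHom_trans_assoc, eqToHom_trans, eqToHom_refl, id_comp, comp_id]
      · -- zs = (d :: r') ++ [c]
        have ih' := ih
        simp only [tensorHom_id, id_tensorHom] at ih'
        rw [splitIso_concat' (xs := (x :: xs') ++ (b :: ys')) (l := d :: r')
              (by simp) (by simp) c,
            splitIso_congr (rfl : x :: xs' = x :: xs')
              ((List.append_assoc (b :: ys') (d :: r') [c]).symm),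
            splitIso_concat' (xs := x :: xs') (l := (b :: ys') ++ (d :: r'))
              (by simp) (by simp) c,
            splitIso_concat' (xs := b :: ys') (l := d :: r') (by simp) (by simp) c]
        simp only [tensorHom_id, id_tensorHom, assoc]
        slice_lhs 4 5 => rw [whisker_exchange]
        slice_lhs 5 6 => rw [associator_naturality_right]
        slice_lhs 3 4 => rw [← associator_naturality_left]
        slice_lhs 4 5 => rw [← pentagon]
        slice_lhs 2 4 =>
          rw [← comp_whiskerRight, ← comp_whiskerRight, ih',
            comp_whiskerRight, comp_whiskerRight]
        slice_lhs 4 5 => rw [associator_naturality_middle]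
        simp only [MonoidalCategory.whiskerLeft_comp, comp_whiskerRight, eqToHom_whiskerRight',
          whiskerLeft_eqToHom', assoc, eqToHom_trans_assoc, eqToHom_trans, eqToHom_refl,
          id_comp, comp_id]


end Paper
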